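/- arXiv:1009.5109 — 2 statements merged into one kernel-verified Lean document; each statement's English description precedes it below -/
import Mathlib

section
/- Let R be a commutative local ring, let r be a natural number, and let M be an a×b matrix over R such that the (r−1)-determinantal ideal of M is the unit ideal (equivalently, some r×r minor of M is a unit of R) and the r-determinantal ideal of M is the zero ideal (all (r+1)×(r+1) minors of M vanish). Then there exist invertible matrices P ∈ GL(a,R) and Q ∈ GL(b,R) such that P·M·Q is the block matrix whose upper-left r×r block is the identity matrix and whose other blocks are zero. -/
/-
Extend the rows and columns of the unit `r × r` minor to orderings of all rows and columns; this
writes `M` as a block matrix `[A B; C D]` with `A` invertible. Bordering `A` by one further row `i`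
and column `j` gives an `(r+1)`-minor equal to `det A * (D - C A⁻¹ B) i j`, so `I_r(M) = 0` forces
the Schur complement `D - C A⁻¹ B` to vanish, and block Gaussian elimination then turns `M` into
`[1 0; 0 0]`.
-/

/-- The `r`-determinantal ideal of a matrix `M`: the ideal generated by the determinants of
all `(r+1) × (r+1)` submatrices of `M`. -/
def detIdeal {R : Type*} [CommRing R] {ι κ : Type*} (M : Matrix ι κ R) (r : ℕ) : Ideal R :=
  Ideal.span { x | ∃ (f : Fin (r + 1) → ι) (g : Fin (r + 1) → κ),
    Function.Injective f ∧ Function.Injective g ∧ x = (M.submatrix f g).det }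

/-- The `q × p` block matrix whose upper-left `l × l` block is `Matrix.diagonal d` and whose
other blocks are zero. -/
noncomputable def blockDiag {R : Type*} [CommRing R] {q p l : ℕ} (hq : l ≤ q) (hp : l ≤ p)
    (d : Fin l → R) : Matrix (Fin q) (Fin p) R :=
  Matrix.reindex (finSumFinEquiv.trans (finCongr (Nat.add_sub_cancel' hq)))
    (finSumFinEquiv.trans (finCongr (Nat.add_sub_cancel' hp)))
    (Matrix.fromBlocks (Matrix.diagonal d) 0 0 0)

section

open Matrix Function

variable {R : Type*} [CommRing R]

open Classical in
noncomputable def finSumComplEquivOfInjective {n r : ℕ} {f : Fin r → Fin n} (hf : Injective f) :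
    Fin r ⊕ Fin (n - r) ≃ Fin n :=
  have hcard : Fintype.card ((Set.range f)ᶜ : Set (Fin n)) = n - r := by
    rw [Fintype.card_compl_set, Set.card_range_of_injective hf, Fintype.card_fin, Fintype.card_fin]
  ((Equiv.ofInjective f hf).sumCongr (Fintype.equivFinOfCardEq hcard).symm).trans
    (Equiv.Set.sumCompl (Set.range f))

@[simp]
lemma finSumComplEquivOfInjective_inl {n r : ℕ} {f : Fin r → Fin n} (hf : Injective f)
    (t : Fin r) : finSumComplEquivOfInjective hf (Sum.inl t) = f t := by
  simp [finSumComplEquivOfInjective]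

lemma detIdeal_submatrix_le {ι κ ι' κ' : Type*} (M : Matrix ι κ R) {e₁ : ι' → ι} {e₂ : κ' → κ}
    (he₁ : Injective e₁) (he₂ : Injective e₂) (r : ℕ) :
    detIdeal (M.submatrix e₁ e₂) r ≤ detIdeal M r :=
  Ideal.span_mono <| by
    rintro x ⟨f, g, hf, hg, rfl⟩
    exact ⟨e₁ ∘ f, e₂ ∘ g, he₁.comp hf, he₂.comp hg, rfl⟩

lemma det_submatrix_eq_zero_of_detIdeal_eq_bot {ι κ ι' : Type*} [Fintype ι'] [DecidableEq ι']
    {M : Matrix ι κ R} {r : ℕ} (hM : detIdeal M r = ⊥) (hcard : Fintype.card ι' = r + 1)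
    {f : ι' → ι} {g : ι' → κ} (hf : Injective f) (hg : Injective g) :
    (M.submatrix f g).det = 0 := by
  let e := (Fintype.equivFinOfCardEq hcard).symm
  have hmem : (M.submatrix (f ∘ e) (g ∘ e)).det ∈ detIdeal M r :=
    Ideal.subset_span ⟨_, _, hf.comp e.injective, hg.comp e.injective, rfl⟩
  rw [hM, Ideal.mem_bot, ← submatrix_submatrix, det_submatrix_equiv_self] at hmem
  exact hmem

section Blocks

variable {m n p : Type*} [Fintype m] [DecidableEq m]
  (A : Matrix m m R) (B : Matrix m p R) (C : Matrix n m R) (D : Matrix n p R) [Invertible A]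

lemma det_submatrix_fromBlocks_sum_map_unit (i : n) (j : p) :
    ((fromBlocks A B C D).submatrix (Sum.map id fun _ : Unit => i)
      (Sum.map id fun _ : Unit => j)).det = A.det * (D - C * ⅟A * B) i j := by
  have hblocks : (fromBlocks A B C D).submatrix (Sum.map id fun _ : Unit => i)
      (Sum.map id fun _ : Unit => j) =
      fromBlocks A (B.submatrix id fun _ => j) (C.submatrix (fun _ => i) id)
        (D.submatrix (fun _ => i) fun _ => j) := by
    ext (x | x) (y | y) <;> rfl
  rw [hblocks, det_fromBlocks₁₁, det_unique (_ - _)]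
  simp [mul_apply]

lemma schur_complement_eq_zero_of_detIdeal_eq_bot
    (h : detIdeal (fromBlocks A B C D) (Fintype.card m) = ⊥) : D - C * ⅟A * B = 0 := by
  ext i j
  have hminor := det_submatrix_eq_zero_of_detIdeal_eq_bot h (by simp)
    (f := Sum.map id fun _ : Unit => i) (g := Sum.map id fun _ : Unit => j)
    (Sum.map_injective.2 ⟨injective_id, injective_of_subsingleton _⟩)
    (Sum.map_injective.2 ⟨injective_id, injective_of_subsingleton _⟩)
  rw [det_submatrix_fromBlocks_sum_map_unit] at hminor
  exact (isUnit_det_of_invertible A).mul_right_eq_zero.1 hminor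

lemma exists_isUnit_mul_fromBlocks_mul_eq [Fintype n] [DecidableEq n] [Fintype p] [DecidableEq p] :
    ∃ (P : Matrix (m ⊕ n) (m ⊕ n) R) (Q : Matrix (m ⊕ p) (m ⊕ p) R), IsUnit P ∧ IsUnit Q ∧
      P * fromBlocks A B C D * Q = fromBlocks 1 0 0 (D - C * ⅟A * B) := by
  refine ⟨fromBlocks (⅟A) 0 (-(C * ⅟A)) 1, fromBlocks 1 (-(⅟A * B)) 0 1,
    isUnit_fromBlocks_zero₁₂.2 ⟨isUnit_of_invertible _, isUnit_one⟩,
    isUnit_fromBlocks_zero₂₁.2 ⟨isUnit_one, isUnit_one⟩, ?_⟩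
  simp [fromBlocks_multiply, Matrix.mul_assoc, sub_eq_neg_add]

end Blocks

lemma exists_isUnit_mul_mul_eq_reindex {m n m' n' : Type*} [Fintype m] [DecidableEq m]
    [Fintype n] [DecidableEq n] [Fintype m'] [DecidableEq m'] [Fintype n'] [DecidableEq n']
    {M : Matrix m n R} {N : Matrix m' n' R} (e₁ : m ≃ m') (e₂ : n ≃ n') (f₁ : m' ≃ m)
    (f₂ : n' ≃ n) {P : Matrix m' m' R} {Q : Matrix n' n' R} (hP : IsUnit P) (hQ : IsUnit Q)
    (h : P * M.reindex e₁ e₂ * Q = N) :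
    ∃ (P' : Matrix m m R) (Q' : Matrix n n R), IsUnit P' ∧ IsUnit Q' ∧
      P' * M * Q' = N.reindex f₁ f₂ := by
  refine ⟨P.submatrix f₁.symm e₁, Q.submatrix e₂ f₂.symm, (isUnit_submatrix_equiv _ _).2 hP,
    (isUnit_submatrix_equiv _ _).2 hQ, ?_⟩
  have hM : M = (M.reindex e₁ e₂).submatrix e₁ e₂ := by simp
  rw [hM, submatrix_mul_equiv, submatrix_mul_equiv, h, reindex_apply]

end

theorem block_identity_of_unit_minor_general {R : Type*} [CommRing R] {a b r : ℕ}
    (M : Matrix (Fin a) (Fin b) R)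
    (h1 : ∃ (f : Fin r → Fin a) (g : Fin r → Fin b),
      Function.Injective f ∧ Function.Injective g ∧ IsUnit (M.submatrix f g).det)
    (h2 : detIdeal M r = ⊥) :
    ∃ (hq : r ≤ a) (hp : r ≤ b) (P : Matrix (Fin a) (Fin a) R)
      (Q : Matrix (Fin b) (Fin b) R), IsUnit P ∧ IsUnit Q ∧
      P * M * Q = blockDiag hq hp (fun _ => (1 : R)) := by
  obtain ⟨f, g, hf, hg, hunit⟩ := h1
  have hq : r ≤ a := by simpa using Fintype.card_le_of_injective f hf
  have hp : r ≤ b := by simpa using Fintype.card_le_of_injective g hg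
  set ea := finSumComplEquivOfInjective hf
  set eb := finSumComplEquivOfInjective hg
  set N := M.reindex ea.symm eb.symm
  have hN₁₁ : N.toBlocks₁₁ = M.submatrix f g := by ext; simp [N, ea, eb, Matrix.toBlocks₁₁]
  have : Invertible N.toBlocks₁₁ := Matrix.invertibleOfIsUnitDet _ (hN₁₁ ▸ hunit)
  have hN : detIdeal N r = ⊥ :=
    le_bot_iff.1 (h2 ▸ detIdeal_submatrix_le M ea.injective eb.injective r)
  have hschur := schur_complement_eq_zero_of_detIdeal_eq_bot N.toBlocks₁₁ N.toBlocks₁₂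
    N.toBlocks₂₁ N.toBlocks₂₂ (by rwa [Matrix.fromBlocks_toBlocks, Fintype.card_fin])
  obtain ⟨P, Q, hP, hQ, hPNQ⟩ := exists_isUnit_mul_fromBlocks_mul_eq N.toBlocks₁₁ N.toBlocks₁₂
    N.toBlocks₂₁ N.toBlocks₂₂
  rw [hschur, Matrix.fromBlocks_toBlocks] at hPNQ
  refine ⟨hq, hp, ?_⟩
  rw [blockDiag, Matrix.diagonal_one]
  exact exists_isUnit_mul_mul_eq_reindex _ _ _ _ hP hQ hPNQ

/-- Over a local ring, if some `r × r` minor of `M` is a unit (i.e. `I_{r-1}(M)` is the unit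
ideal) and `I_r(M) = 0` (all `(r+1) × (r+1)` minors vanish), then `M` is equivalent, via
invertible row and column operations, to the block matrix with upper-left `r × r` identity
block and zero elsewhere. -/
theorem block_identity_of_unit_minor {R : Type*} [CommRing R] [IsLocalRing R] {a b r : ℕ}
    (M : Matrix (Fin a) (Fin b) R)
    (h1 : ∃ (f : Fin r → Fin a) (g : Fin r → Fin b),
      Function.Injective f ∧ Function.Injective g ∧ IsUnit (M.submatrix f g).det)
    (h2 : detIdeal M r = ⊥) :
    ∃ (hq : r ≤ a) (hp : r ≤ b) (P : Matrix (Fin a) (Fin a) R)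
      (Q : Matrix (Fin b) (Fin b) R), IsUnit P ∧ IsUnit Q ∧
      P * M * Q = blockDiag hq hp (fun _ => (1 : R)) :=
  block_identity_of_unit_minor_general M h1 h2
end

section
/- Let f : R → S be an injective homomorphism between integral domains and let M be a q×p matrix over R such that the matrix M.map f (obtained by applying f to each entry of M) is diagonalizable with divisibility chain over S. Then for every natural number r, the extension Ideal.map f (I_r(M)) of the r-determinantal ideal of M to S is a principal ideal of S. -/
open Matrix


/-- A `q × p` matrix `M` over `R` is diagonalizable with divisibility chain `d 0, …, d (l-1)`:
there are invertible matrices `P ∈ GL(q,R)` and `Q ∈ GL(p,R)` such that `P * M * Q` is the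
block matrix with upper-left `l × l` block `diag (d 0, …, d (l-1))` and zero elsewhere, where
the `d i` are nonzero and `d i ∣ d (i+1)`. -/
def IsDiagonalizableWithChain {R : Type*} [CommRing R] {q p : ℕ}
    (M : Matrix (Fin q) (Fin p) R) (l : ℕ) (d : Fin l → R) : Prop :=
  ∃ (hq : l ≤ q) (hp : l ≤ p) (P : Matrix (Fin q) (Fin q) R) (Q : Matrix (Fin p) (Fin p) R),
    IsUnit P ∧ IsUnit Q ∧ (∀ i, d i ≠ 0) ∧
    (∀ (i : Fin l) (hi : (i : ℕ) + 1 < l), d i ∣ d ⟨(i : ℕ) + 1, hi⟩) ∧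
    P * M * Q = blockDiag hq hp d

lemma map_detIdeal {R S : Type*} [CommRing R] [CommRing S] (f : R →+* S)
    {ι κ : Type*} (M : Matrix ι κ R) (r : ℕ) :
    Ideal.map f (detIdeal M r) = detIdeal (M.map f) r := by
  rw [detIdeal, Ideal.map_span, detIdeal]
  congr 1
  ext x
  constructor
  · rintro ⟨y, ⟨a, b, ha, hb, rfl⟩, rfl⟩
    exact ⟨a, b, ha, hb, by rw [RingHom.map_det]; simp [RingHom.mapMatrix_apply, Matrix.submatrix_map]⟩
  · rintro ⟨a, b, ha, hb, rfl⟩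
    exact ⟨(M.submatrix a b).det, ⟨a, b, ha, hb, rfl⟩,
      by rw [RingHom.map_det]; simp [RingHom.mapMatrix_apply, Matrix.submatrix_map]⟩

lemma detIdeal_transpose {R : Type*} [CommRing R] {ι κ : Type*} (M : Matrix ι κ R) (r : ℕ) :
    detIdeal Mᵀ r = detIdeal M r := by
  rw [detIdeal, detIdeal]
  congr 1
  ext x
  constructor
  · rintro ⟨a, b, ha, hb, rfl⟩
    exact ⟨b, a, hb, ha, by rw [← Matrix.transpose_submatrix, Matrix.det_transpose]⟩
  · rintro ⟨a, b, ha, hb, rfl⟩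
    exact ⟨b, a, hb, ha, by rw [← Matrix.transpose_submatrix, Matrix.det_transpose]⟩

lemma detIdeal_mul_le_right {R : Type*} [CommRing R] {ι κ μ : Type*} [Fintype κ]
    (A : Matrix ι κ R) (B : Matrix κ μ R) (r : ℕ) :
    detIdeal (A * B) r ≤ detIdeal B r := by
  rw [detIdeal, Ideal.span_le]
  rintro x ⟨a, b, ha, hb, rfl⟩
  have hsub : (A * B).submatrix a b =
      A.submatrix a _root_.id * B.submatrix _root_.id b := by
    rw [Matrix.submatrix_mul A B a _root_.id b Function.bijective_id]
  set C := A.submatrix a _root_.id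
  set D := B.submatrix _root_.id b
  have hrows : (fun i => (C * D) i) = fun i => ∑ k, C i k • D k := by
    funext i j
    simp [Matrix.mul_apply, Finset.sum_apply]
  have hdet : (C * D).det =
      ∑ k : Fin (r + 1) → κ, (∏ i, C i (k i)) • (D.submatrix k _root_.id).det := by
    show Matrix.detRowAlternating (C * D) = _
    calc Matrix.detRowAlternating (C * D)
        = Matrix.detRowAlternating (fun i => ∑ k, C i k • D k) := by rw [← hrows]
      _ = ∑ k : Fin (r + 1) → κ,
            Matrix.detRowAlternating (fun i => C i (k i) • D (k i)) := by
          exact (Matrix.detRowAlternating).toMultilinearMap.map_sum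
            (g := fun i k => C i k • D k)
      _ = ∑ k : Fin (r + 1) → κ,
            (∏ i, C i (k i)) • (D.submatrix k _root_.id).det := by
          refine Finset.sum_congr rfl fun k _ => ?_
          show (Matrix.detRowAlternating).toMultilinearMap (fun i => C i (k i) • D (k i)) = _
          rw [(Matrix.detRowAlternating).toMultilinearMap.map_smul_univ]
          rfl
  rw [hsub, hdet]
  refine Ideal.sum_mem _ fun k _ => ?_
  by_cases hk : Function.Injective k
  · rw [smul_eq_mul]
    refine Ideal.mul_mem_left _ _ (Ideal.subset_span ?_)
    refine ⟨k, b, hk, hb, ?_⟩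
    simp [D, Matrix.submatrix_submatrix]
  · rw [Function.not_injective_iff] at hk
    obtain ⟨i, j, hij, hne⟩ := hk
    rw [Matrix.det_zero_of_row_eq hne (by funext x; simp [Matrix.submatrix_apply, hij]), smul_zero]
    exact Ideal.zero_mem _

lemma detIdeal_mul_le_left {R : Type*} [CommRing R] {ι κ μ : Type*} [Fintype κ]
    (A : Matrix ι κ R) (B : Matrix κ μ R) (r : ℕ) :
    detIdeal (A * B) r ≤ detIdeal A r := by
  have h1 : detIdeal ((A * B)ᵀ) r ≤ detIdeal (Aᵀ) r := by
    rw [Matrix.transpose_mul]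
    exact detIdeal_mul_le_right Bᵀ Aᵀ r
  rwa [detIdeal_transpose, detIdeal_transpose] at h1

lemma detIdeal_unit_mul {R : Type*} [CommRing R] {q p : ℕ}
    (P : Matrix (Fin q) (Fin q) R) (Q : Matrix (Fin p) (Fin p) R)
    (hP : IsUnit P) (hQ : IsUnit Q) (M : Matrix (Fin q) (Fin p) R) (r : ℕ) :
    detIdeal (P * M * Q) r = detIdeal M r := by
  obtain ⟨u, rfl⟩ := hP
  obtain ⟨v, rfl⟩ := hQ
  refine le_antisymm
    ((detIdeal_mul_le_left _ _ r).trans (detIdeal_mul_le_right _ _ r)) ?_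
  have h1 : (u⁻¹).val * u.val = (1 : Matrix (Fin q) (Fin q) R) := by
    simp
  have h2 : v.val * (v⁻¹).val = (1 : Matrix (Fin p) (Fin p) R) := by
    simp
  have hM : (u⁻¹).val * (u.val * M * v.val) * (v⁻¹).val = M := by
    rw [Matrix.mul_assoc, Matrix.mul_assoc (u.val * M), h2, Matrix.mul_one, ← Matrix.mul_assoc, h1, Matrix.one_mul]
  nth_rewrite 1 [← hM]
  exact (detIdeal_mul_le_left _ _ r).trans (detIdeal_mul_le_right _ _ r)

lemma strictMono_val_le {n l : ℕ} (f : Fin n → Fin l) (hf : StrictMono f) (i : Fin n) :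
    (i : ℕ) ≤ (f i : ℕ) := by
  have key : ∀ m : ℕ, ∀ i : Fin n, (i : ℕ) = m → m ≤ (f i : ℕ) := by
    intro m
    induction m with
    | zero => intro i _; exact Nat.zero_le _
    | succ m ih =>
      intro i hi
      have hm : m < n := by omega
      have hlt : (⟨m, hm⟩ : Fin n) < i := by
        rw [Fin.lt_def]; simp; omega
      have := hf hlt
      have h2 := ih ⟨m, hm⟩ rfl
      rw [Fin.lt_def] at this
      omega
  exact key _ i rfl

lemma chain_dvd {S : Type*} [CommMonoid S] {l : ℕ} (d : Fin l → S)
    (h : ∀ (i : Fin l) (hi : (i : ℕ) + 1 < l), d i ∣ d ⟨(i : ℕ) + 1, hi⟩) :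
    ∀ i j : Fin l, i ≤ j → d i ∣ d j := by
  have key : ∀ n : ℕ, ∀ i j : Fin l, (j : ℕ) = (i : ℕ) + n → d i ∣ d j := by
    intro n
    induction n with
    | zero => intro i j hij; rw [Fin.ext (by omega : (i : ℕ) = (j : ℕ))]
    | succ n ih =>
      intro i j hij
      have hjl : (i : ℕ) + n < l := by omega
      have h1 : d i ∣ d ⟨(i : ℕ) + n, hjl⟩ := ih i _ (by simp)
      have h2 : d ⟨(i : ℕ) + n, hjl⟩ ∣ d j := by
        have := h ⟨(i : ℕ) + n, hjl⟩ (by simpa using (by omega : (i : ℕ) + n + 1 < l))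
        convert this using 2
        exact Fin.ext (by simp; omega)
      exact h1.trans h2
  intro i j hij
  exact key ((j : ℕ) - (i : ℕ)) i j (by rw [Fin.le_def] at hij; omega)

lemma prod_castLE_dvd {S : Type*} [CommMonoid S] {l n : ℕ} (h : n ≤ l) (d : Fin l → S)
    (hchain : ∀ i j : Fin l, i ≤ j → d i ∣ d j) (k : Fin n → Fin l)
    (hk : Function.Injective k) :
    (∏ i : Fin n, d (Fin.castLE h i)) ∣ ∏ i : Fin n, d (k i) := by
  set σ := Tuple.sort k with hσ
  have hmono : Monotone (k ∘ σ) := Tuple.monotone_sort k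
  have hsm : StrictMono (k ∘ σ) := hmono.strictMono_of_injective (hk.comp σ.injective)
  have hprod : ∏ i : Fin n, d (k i) = ∏ i : Fin n, d (k (σ i)) :=
    (Equiv.prod_comp σ fun i => d (k i)).symm
  rw [hprod]
  refine Finset.prod_dvd_prod_of_dvd _ _ fun i _ => ?_
  refine hchain _ _ ?_
  rw [Fin.le_def]
  simpa using strictMono_val_le (k ∘ σ) hsm i

lemma dvd_det_submatrix_fromBlocks {S : Type*} [CommRing S] {l r : ℕ} {α β : Type*}
    (d : Fin l → S) (hchain : ∀ i j : Fin l, i ≤ j → d i ∣ d j)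
    (a : Fin (r + 1) → Fin l ⊕ α) (b : Fin (r + 1) → Fin l ⊕ β)
    (ha : Function.Injective a) (hb : Function.Injective b) :
    (if h : r + 1 ≤ l then ∏ i : Fin (r + 1), d (Fin.castLE h i) else 0) ∣
      ((Matrix.fromBlocks (Matrix.diagonal d) 0 0 0).submatrix a b).det := by
  rw [Matrix.det_apply]
  refine Finset.dvd_sum fun σ _ => ?_
  rw [Units.smul_def, zsmul_eq_mul]
  refine Dvd.dvd.mul_left ?_ _
  by_cases hz : ∃ i, (Matrix.fromBlocks (Matrix.diagonal d) 0 0 0 :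
      Matrix (Fin l ⊕ α) (Fin l ⊕ β) S) (a (σ i)) (b i) = 0
  · obtain ⟨i, hi⟩ := hz
    rw [Finset.prod_eq_zero (Finset.mem_univ i) (by simpa using hi)]
    exact dvd_zero _
  · push_neg at hz
    have hex : ∀ i, ∃ x : Fin l, a (σ i) = Sum.inl x ∧ b i = Sum.inl x := by
      intro i
      have hzi := hz i
      rcases h1 : a (σ i) with x | x <;> rcases h2 : b i with y | y <;>
        rw [h1, h2] at hzi <;>
        simp only [Matrix.fromBlocks_apply₁₁, Matrix.fromBlocks_apply₁₂,
          Matrix.fromBlocks_apply₂₁, Matrix.fromBlocks_apply₂₂, Matrix.zero_apply,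
          ne_eq, not_true_eq_false] at hzi
      · refine ⟨y, ?_, rfl⟩
        by_cases hxy : x = y
        · rw [hxy]
        · exact absurd (Matrix.diagonal_apply_ne d hxy) hzi
      all_goals exact absurd rfl hzi
    choose k hk1 hk2 using hex
    have hkinj : Function.Injective k := by
      intro i j hij
      exact hb (by rw [hk2 i, hk2 j, hij])
    have hrl : r + 1 ≤ l := by
      simpa using Fintype.card_le_of_injective k hkinj
    rw [dif_pos hrl]
    have hterm : ∀ i, ((Matrix.fromBlocks (Matrix.diagonal d) 0 0 0 :
        Matrix (Fin l ⊕ α) (Fin l ⊕ β) S).submatrix a b) (σ i) i = d (k i) := by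
      intro i
      rw [Matrix.submatrix_apply, hk1 i, hk2 i, Matrix.fromBlocks_apply₁₁,
        Matrix.diagonal_apply_eq]
    rw [Finset.prod_congr rfl fun i _ => hterm i]
    exact prod_castLE_dvd hrl d hchain k hkinj

lemma detIdeal_blockDiag' {S : Type*} [CommRing S] {q p l : ℕ} (hq : l ≤ q) (hp : l ≤ p)
    (d : Fin l → S)
    (hchain : ∀ i j : Fin l, i ≤ j → d i ∣ d j) (r : ℕ) :
    detIdeal (blockDiag hq hp d) r =
      Ideal.span {if h : r + 1 ≤ l then ∏ i : Fin (r + 1), d (Fin.castLE h i) else 0} := by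
  set e₁ := finSumFinEquiv.trans (finCongr (Nat.add_sub_cancel' hq)) with he₁
  set e₂ := finSumFinEquiv.trans (finCongr (Nat.add_sub_cancel' hp)) with he₂
  have hbd : blockDiag hq hp d =
      (Matrix.fromBlocks (Matrix.diagonal d) 0 0 0).submatrix ⇑e₁.symm ⇑e₂.symm := by
    rw [he₁, he₂]; rfl
  apply le_antisymm
  · rw [detIdeal, Ideal.span_le]
    rintro x ⟨a, b, ha, hb, rfl⟩
    rw [SetLike.mem_coe, Ideal.mem_span_singleton]
    have hsub : (blockDiag hq hp d).submatrix a b =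
        (Matrix.fromBlocks (Matrix.diagonal d) 0 0 0).submatrix
          (⇑e₁.symm ∘ a) (⇑e₂.symm ∘ b) := by
      rw [hbd, Matrix.submatrix_submatrix]
    rw [hsub]
    exact dvd_det_submatrix_fromBlocks d hchain _ _
      (e₁.symm.injective.comp ha) (e₂.symm.injective.comp hb)
  · rw [Ideal.span_le, Set.singleton_subset_iff]
    by_cases h : r + 1 ≤ l
    · rw [dif_pos h]
      refine Ideal.subset_span ?_
      refine ⟨fun i => e₁ (Sum.inl (Fin.castLE h i)), fun i => e₂ (Sum.inl (Fin.castLE h i)),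
        e₁.injective.comp (Sum.inl_injective.comp (Fin.castLE_injective h)),
        e₂.injective.comp (Sum.inl_injective.comp (Fin.castLE_injective h)), ?_⟩
      have : (blockDiag hq hp d).submatrix
          (fun i => e₁ (Sum.inl (Fin.castLE h i))) (fun i => e₂ (Sum.inl (Fin.castLE h i)))
          = Matrix.diagonal fun i => d (Fin.castLE h i) := by
        ext i j
        rw [Matrix.submatrix_apply, hbd, Matrix.submatrix_apply,
          Equiv.symm_apply_apply, Equiv.symm_apply_apply, Matrix.fromBlocks_apply₁₁]
        by_cases hij : i = j
        · rw [hij]; simp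
        · rw [Matrix.diagonal_apply_ne _ hij,
            Matrix.diagonal_apply_ne _ (fun hc => hij (Fin.castLE_injective h hc))]
      rw [this, Matrix.det_diagonal]
    · rw [dif_neg h]
      exact Ideal.zero_mem _

/-- If `f : R → S` is an injective homomorphism of domains and `M.map f` is diagonalizable
with a divisibility chain over `S`, then the extension `Ideal.map f (I_r M)` of every
determinantal ideal of `M` is principal. -/
theorem map_detIdeal_isPrincipal_of_isDiagonalizableWithChain {R S : Type*} [CommRing R]
    [IsDomain R] [CommRing S] [IsDomain S] (f : R →+* S) (hf : Function.Injective f)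
    {q p : ℕ} (M : Matrix (Fin q) (Fin p) R)
    (h : ∃ (l : ℕ) (d : Fin l → S), IsDiagonalizableWithChain (M.map f) l d) :
    ∀ r : ℕ, (Ideal.map f (detIdeal M r)).IsPrincipal := by
  intro r
  obtain ⟨l, d, hq, hp, P, Q, hP, hQ, hd0, hchainstep, hPQ⟩ := h
  have hchain := chain_dvd d hchainstep
  have e1 : Ideal.map f (detIdeal M r) = detIdeal (M.map f) r := map_detIdeal f M r
  have e2 : detIdeal (M.map f) r = detIdeal (blockDiag hq hp d) r := by
    rw [← hPQ, detIdeal_unit_mul P Q hP hQ]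
  exact ⟨⟨_, by rw [e1, e2, detIdeal_blockDiag' hq hp d hchain r,
    Ideal.submodule_span_eq]⟩⟩
end
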